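/- Let p: ℝ → ℝ be smooth and 2π-periodic. Then for every σ ∈ ℝ, lim_{a→0⁺} a · 𝓘₁(σ, a) = c · (p(σ + π/2) + p(σ + 3π/2)), where c := 2∫₀^{+∞} (t² − 1)/(t² + 1)^{5/2} dt. -/

import Mathlib

open Real Set Filter Topology MeasureTheory intervalIntegral

/-- 𝓘₁(σ,a). -/
noncomputable def I1 (p : ℝ → ℝ) (σ a : ℝ) : ℝ :=
  ∫ α in (0:ℝ)..(2 * π), p (α + σ) *
    ((a ^ 2)⁻¹ * Real.cos α ^ 2 - a ^ 2 * Real.sin α ^ 2) *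
    ((a ^ 2)⁻¹ * Real.cos α ^ 2 + a ^ 2 * Real.sin α ^ 2) ^ (-(5:ℝ) / 2)

/-- The constant c = 2∫₀^∞ (t²-1)/(t²+1)^{5/2} dt. -/
noncomputable def cConst : ℝ :=
  2 * ∫ t in Ioi (0:ℝ), (t ^ 2 - 1) / (t ^ 2 + 1) ^ ((5:ℝ) / 2)

noncomputable def gfun (t : ℝ) : ℝ := (t ^ 2 - 1) / (t ^ 2 + 1) ^ ((5:ℝ) / 2)

lemma gfun_cont : Continuous gfun := by
  apply Continuous.div
  · continuity
  · apply Continuous.rpow_const (by continuity)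
    intro t; left; positivity
  · intro t; exact ne_of_gt (Real.rpow_pos_of_pos (by positivity) _)

lemma integral_gfun : (∫ t : ℝ, gfun t) = cConst := by
  have h := integral_comp_abs (f := gfun)
  have h2 : (∫ x : ℝ, gfun |x|) = ∫ x : ℝ, gfun x := by
    congr 1; funext x; simp [gfun, sq_abs]
  rw [h2] at h
  rw [show cConst = 2 * ∫ x in Ioi (0:ℝ), gfun x from rfl, ← h]

lemma rpow_five_half {y : ℝ} (hy : 0 < y) : y ^ ((5:ℝ)/2) = y ^ 2 * Real.sqrt y := by
  have : ((5:ℝ)/2) = (2:ℝ) + 1/2 := by norm_num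
  rw [this, Real.rpow_add hy, Real.sqrt_eq_rpow, ← Real.rpow_natCast y 2]
  norm_num

lemma rpow_neg_five_half {y : ℝ} (hy : 0 < y) : y ^ (-(5:ℝ)/2) = (y ^ 2 * Real.sqrt y)⁻¹ := by
  rw [neg_div, Real.rpow_neg hy.le, rpow_five_half hy]

lemma alg (a t P : ℝ) (ha : 0 < a) :
    a * (a ^ 2 / (1 + (a ^ 2 * t) ^ 2) *
      (P * ((a ^ 2)⁻¹ * ((a ^ 2 * t) ^ 2 / (1 + (a ^ 2 * t) ^ 2)) -
              a ^ 2 * (1 / (1 + (a ^ 2 * t) ^ 2))) *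
        ((a ^ 2 * (t ^ 2 + 1) / (1 + (a ^ 2 * t) ^ 2)) ^ 2 *
          (a * Real.sqrt (t ^ 2 + 1) / Real.sqrt (1 + (a ^ 2 * t) ^ 2)))⁻¹))
    = P * Real.sqrt (1 + (a ^ 2 * t) ^ 2) *
        ((t ^ 2 - 1) / ((t ^ 2 + 1) ^ 2 * Real.sqrt (t ^ 2 + 1))) := by
  have ha0 : a ≠ 0 := ha.ne'
  set u : ℝ := Real.sqrt (t ^ 2 + 1) with hu
  set v : ℝ := Real.sqrt (1 + (a ^ 2 * t) ^ 2) with hv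
  have hu2 : u ^ 2 = t ^ 2 + 1 := Real.sq_sqrt (by positivity)
  have hv2 : v ^ 2 = 1 + (a ^ 2 * t) ^ 2 := Real.sq_sqrt (by positivity)
  have hu0 : u ≠ 0 := ne_of_gt (Real.sqrt_pos.2 (by positivity))
  have hv0 : v ≠ 0 := ne_of_gt (Real.sqrt_pos.2 (by positivity))
  rw [← hu2, ← hv2]
  field_simp

lemma pointwise_id (p : ℝ → ℝ) (σ a b t : ℝ) (ha : 0 < a) (hb : Real.cos b = 0) :
    a * (|(-(a ^ 2 / (1 + (a ^ 2 * t) ^ 2)))| *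
      (p (b - arctan (a ^ 2 * t) + σ) *
        ((a ^ 2)⁻¹ * Real.cos (b - arctan (a ^ 2 * t)) ^ 2 -
          a ^ 2 * Real.sin (b - arctan (a ^ 2 * t)) ^ 2) *
        ((a ^ 2)⁻¹ * Real.cos (b - arctan (a ^ 2 * t)) ^ 2 +
          a ^ 2 * Real.sin (b - arctan (a ^ 2 * t)) ^ 2) ^ (-(5:ℝ) / 2)))
    = p (b - arctan (a ^ 2 * t) + σ) * Real.sqrt (1 + (a ^ 2 * t) ^ 2) * gfun t := by
  have ha0 : a ≠ 0 := ha.ne'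
  have hx : (0:ℝ) < 1 + (a ^ 2 * t) ^ 2 := by positivity
  have hsb : Real.sin b ^ 2 = 1 := by
    have := Real.sin_sq_add_cos_sq b; rw [hb] at this; nlinarith
  have h1 : Real.cos (b - arctan (a ^ 2 * t)) ^ 2
      = (a ^ 2 * t) ^ 2 / (1 + (a ^ 2 * t) ^ 2) := by
    have hc : Real.cos (b - arctan (a ^ 2 * t))
        = Real.sin b * Real.sin (arctan (a ^ 2 * t)) := by
      rw [Real.cos_sub, hb]; ring
    rw [hc, mul_pow, hsb, one_mul, Real.sin_arctan, div_pow, Real.sq_sqrt hx.le]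
  have h2 : Real.sin (b - arctan (a ^ 2 * t)) ^ 2 = 1 / (1 + (a ^ 2 * t) ^ 2) := by
    have hs : Real.sin (b - arctan (a ^ 2 * t))
        = Real.sin b * Real.cos (arctan (a ^ 2 * t)) := by
      rw [Real.sin_sub, hb]; ring
    rw [hs, mul_pow, hsb, one_mul, Real.cos_arctan, div_pow, Real.sq_sqrt hx.le, one_pow]
  have hWbase : (a ^ 2)⁻¹ * ((a ^ 2 * t) ^ 2 / (1 + (a ^ 2 * t) ^ 2)) +
      a ^ 2 * (1 / (1 + (a ^ 2 * t) ^ 2)) = a ^ 2 * (t ^ 2 + 1) / (1 + (a ^ 2 * t) ^ 2) := by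
    field_simp
  have hWpos : (0:ℝ) < a ^ 2 * (t ^ 2 + 1) / (1 + (a ^ 2 * t) ^ 2) := by positivity
  have hsqrtW : Real.sqrt (a ^ 2 * (t ^ 2 + 1) / (1 + (a ^ 2 * t) ^ 2))
      = a * Real.sqrt (t ^ 2 + 1) / Real.sqrt (1 + (a ^ 2 * t) ^ 2) := by
    rw [Real.sqrt_div (by positivity) _, Real.sqrt_mul (by positivity) _,
      Real.sqrt_sq ha.le]
  rw [abs_neg, abs_of_pos (by positivity), h1, h2, hWbase,
    rpow_neg_five_half hWpos, hsqrtW]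
  simp only [gfun]
  rw [rpow_five_half (by positivity : (0:ℝ) < t ^ 2 + 1)]
  exact alg a t _ ha

lemma cov (p : ℝ → ℝ) (σ a b : ℝ) (ha : 0 < a) (hb : Real.cos b = 0) :
    a * ∫ α in Ioo (b - π / 2) (b + π / 2),
        p (α + σ) * ((a ^ 2)⁻¹ * Real.cos α ^ 2 - a ^ 2 * Real.sin α ^ 2) *
          ((a ^ 2)⁻¹ * Real.cos α ^ 2 + a ^ 2 * Real.sin α ^ 2) ^ (-(5:ℝ) / 2)
    = ∫ t : ℝ, p (b - arctan (a ^ 2 * t) + σ) * Real.sqrt (1 + (a ^ 2 * t) ^ 2) * gfun t := by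
  have ha0 : a ≠ 0 := ha.ne'
  have ha2 : (a:ℝ) ^ 2 ≠ 0 := by positivity
  set φ : ℝ → ℝ := fun t => b - arctan (a ^ 2 * t) with hφ
  have hderiv : ∀ t ∈ (univ : Set ℝ),
      HasDerivWithinAt φ (-(a ^ 2 / (1 + (a ^ 2 * t) ^ 2))) univ t := by
    intro t _
    have h1 : HasDerivAt (fun s : ℝ => a ^ 2 * s) (a ^ 2) t := by
      simpa using (hasDerivAt_id t).const_mul (a ^ 2)
    have h2 := (Real.hasDerivAt_arctan (a ^ 2 * t)).comp t h1
    have h3 : HasDerivAt φ (-(1 / (1 + (a ^ 2 * t) ^ 2) * a ^ 2)) t := h2.const_sub b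
    have : -(1 / (1 + (a ^ 2 * t) ^ 2) * a ^ 2) = -(a ^ 2 / (1 + (a ^ 2 * t) ^ 2)) := by
      ring
    exact (this ▸ h3).hasDerivWithinAt
  have hinj : InjOn φ univ := by
    intro s _ t _ h
    simp only [hφ] at h
    have hA : arctan (a ^ 2 * s) = arctan (a ^ 2 * t) := by linarith
    exact mul_left_cancel₀ ha2 (Real.arctan_injective hA)
  have himg : φ '' univ = Ioo (b - π / 2) (b + π / 2) := by
    rw [image_univ]
    ext x
    simp only [mem_range, mem_Ioo]
    constructor
    · rintro ⟨t, rfl⟩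
      constructor
      · have := Real.arctan_lt_pi_div_two (a ^ 2 * t); simp only [hφ]; linarith
      · have := Real.neg_pi_div_two_lt_arctan (a ^ 2 * t); simp only [hφ]; linarith
    · rintro ⟨h1, h2⟩
      refine ⟨Real.tan (b - x) / a ^ 2, ?_⟩
      have hx1 : -(π / 2) < b - x := by linarith
      have hx2 : b - x < π / 2 := by linarith
      simp only [hφ]
      rw [mul_div_cancel₀ _ ha2, Real.arctan_tan hx1 hx2]
      ring
  rw [← himg,
    integral_image_eq_integral_abs_deriv_smul MeasurableSet.univ hderiv hinj,
    setIntegral_univ, ← MeasureTheory.integral_const_mul]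
  congr 1
  funext t
  rw [smul_eq_mul]
  have := pointwise_id p σ a b t ha hb
  simp only [hφ]
  rw [← this]

lemma sqrt_mul_gfun_bound (t : ℝ) :
    Real.sqrt (1 + t ^ 2) * |gfun t| ≤ (1 + t ^ 2)⁻¹ := by
  have h1 : (0:ℝ) < t ^ 2 + 1 := by positivity
  have hs : (0:ℝ) < Real.sqrt (t ^ 2 + 1) := Real.sqrt_pos.2 h1
  have hnum : |t ^ 2 - 1| ≤ t ^ 2 + 1 := by
    rw [abs_le]; constructor <;> nlinarith
  have hcomm : (1:ℝ) + t ^ 2 = t ^ 2 + 1 := by ring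
  rw [hcomm, gfun, rpow_five_half h1, abs_div,
    abs_of_pos (show (0:ℝ) < (t ^ 2 + 1) ^ 2 * Real.sqrt (t ^ 2 + 1) by positivity)]
  have key : Real.sqrt (t ^ 2 + 1) * (|t ^ 2 - 1| / ((t ^ 2 + 1) ^ 2 * Real.sqrt (t ^ 2 + 1)))
      = |t ^ 2 - 1| / (t ^ 2 + 1) ^ 2 := by
    field_simp
  rw [key, div_le_iff₀ (by positivity)]
  have h2 : (t ^ 2 + 1)⁻¹ * (t ^ 2 + 1) ^ 2 = t ^ 2 + 1 := by
    field_simp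
  rw [h2]
  exact hnum

lemma tendsto_part (p : ℝ → ℝ) (hc : Continuous p) (M : ℝ) (hM : ∀ x, |p x| ≤ M) (σ b : ℝ) :
    Tendsto (fun a : ℝ => ∫ t : ℝ,
        p (b - arctan (a ^ 2 * t) + σ) * Real.sqrt (1 + (a ^ 2 * t) ^ 2) * gfun t)
      (𝓝[>] (0:ℝ)) (𝓝 (p (b + σ) * ∫ t : ℝ, gfun t)) := by
  have hM0 : (0:ℝ) ≤ M := le_trans (abs_nonneg _) (hM 0)
  have key := MeasureTheory.tendsto_integral_filter_of_dominated_convergence (μ := volume)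
    (l := 𝓝[>] (0:ℝ))
    (F := fun (a : ℝ) (t : ℝ) =>
      p (b - arctan (a ^ 2 * t) + σ) * Real.sqrt (1 + (a ^ 2 * t) ^ 2) * gfun t)
    (f := fun t => p (b + σ) * gfun t)
    (bound := fun t => M * (1 + t ^ 2)⁻¹)
    ?_ ?_ ?_ ?_
  · rw [MeasureTheory.integral_const_mul] at key
    exact key
  · -- measurability
    apply Eventually.of_forall
    intro a
    apply Continuous.aestronglyMeasurable
    apply Continuous.mul
    apply Continuous.mul
    · exact hc.comp ((continuous_const.sub
        (Real.continuous_arctan.comp (continuous_const.mul continuous_id))).add continuous_const)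
    · exact Real.continuous_sqrt.comp
        (continuous_const.add ((continuous_const.mul continuous_id).pow 2))
    · exact gfun_cont
  · -- bound
    filter_upwards [Ioo_mem_nhdsGT_of_mem
      (show (0:ℝ) ∈ Ico (0:ℝ) 1 by constructor <;> norm_num)] with a ha
    apply Eventually.of_forall
    intro t
    have hs1 : Real.sqrt (1 + (a ^ 2 * t) ^ 2) ≤ Real.sqrt (1 + t ^ 2) := by
      apply Real.sqrt_le_sqrt
      have ha4 : a ^ 4 ≤ 1 := by nlinarith [ha.1, ha.2, pow_le_one₀ ha.1.le ha.2.le (n := 4)]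
      nlinarith [mul_le_mul_of_nonneg_right ha4 (sq_nonneg t)]
    calc ‖p (b - arctan (a ^ 2 * t) + σ) * Real.sqrt (1 + (a ^ 2 * t) ^ 2) * gfun t‖
        = |p (b - arctan (a ^ 2 * t) + σ)| * (Real.sqrt (1 + (a ^ 2 * t) ^ 2) * |gfun t|) := by
          rw [Real.norm_eq_abs, abs_mul, abs_mul,
            abs_of_nonneg (Real.sqrt_nonneg _), mul_assoc]
      _ ≤ M * (Real.sqrt (1 + t ^ 2) * |gfun t|) := by
          apply mul_le_mul (hM _) ?_ (by positivity) hM0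
          exact mul_le_mul_of_nonneg_right hs1 (abs_nonneg _)
      _ ≤ M * (1 + t ^ 2)⁻¹ := mul_le_mul_of_nonneg_left (sqrt_mul_gfun_bound t) hM0
  · -- integrable bound
    exact integrable_inv_one_add_sq.const_mul M
  · -- pointwise limit
    apply Eventually.of_forall
    intro t
    have hΦ : Continuous (fun x : ℝ => p (b - arctan x + σ) * Real.sqrt (1 + x ^ 2) * gfun t) := by
      apply Continuous.mul
      apply Continuous.mul
      · exact hc.comp ((continuous_const.sub Real.continuous_arctan).add continuous_const)
      · exact Real.continuous_sqrt.comp (continuous_const.add (continuous_pow 2))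
      · exact continuous_const
    have h0 : Tendsto (fun a : ℝ => a ^ 2 * t) (𝓝[>] (0:ℝ)) (𝓝 (0:ℝ)) := by
      have : Tendsto (fun a : ℝ => a ^ 2 * t) (𝓝 (0:ℝ)) (𝓝 ((0:ℝ) ^ 2 * t)) :=
        ((continuous_pow 2).mul continuous_const).tendsto 0
      simpa using this.mono_left nhdsWithin_le_nhds
    have := (hΦ.tendsto 0).comp h0
    simpa [Function.comp_def, Real.arctan_zero, Real.sqrt_one] using this

/-- The limit of a·𝓘₁(σ,a) as a → 0⁺. -/
theorem limit_a_mul_I1_at_zero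
    (p : ℝ → ℝ) (hp : ContDiff ℝ (⊤ : ℕ∞) p) (hper : ∀ α, p (α + 2 * π) = p α) :
    ∀ σ : ℝ,
      Tendsto (fun a : ℝ => a * I1 p σ a) (𝓝[>] 0)
        (𝓝 (cConst * (p (σ + π / 2) + p (σ + 3 * π / 2)))) := by
  intro σ
  have hc : Continuous p := hp.continuous
  -- bound on p
  obtain ⟨M, hM⟩ : ∃ M, ∀ x, |p x| ≤ M := by
    have hper' : Function.Periodic p (2 * π) := hper
    have hbd := hper'.isBounded_of_continuous (by positivity) hc
    obtain ⟨r, hr⟩ := (Metric.isBounded_iff_subset_closedBall 0).1 hbd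
    exact ⟨r, fun x => by
      have := hr (mem_range_self (f := p) x)
      simpa [Real.dist_eq] using this⟩
  have hcos3 : Real.cos (3 * π / 2) = 0 := by
    have : (3:ℝ) * π / 2 = π + π / 2 := by ring
    rw [this, Real.cos_add, Real.cos_pi_div_two, Real.sin_pi_div_two]
    simp
  -- eventual equality
  have heq : ∀ a : ℝ, 0 < a → a * I1 p σ a =
      (∫ t : ℝ, p (π / 2 - arctan (a ^ 2 * t) + σ) * Real.sqrt (1 + (a ^ 2 * t) ^ 2) * gfun t) +
      (∫ t : ℝ, p (3 * π / 2 - arctan (a ^ 2 * t) + σ) * Real.sqrt (1 + (a ^ 2 * t) ^ 2) * gfun t) := by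
    intro a ha
    have hWpos : ∀ α : ℝ, 0 < (a ^ 2)⁻¹ * Real.cos α ^ 2 + a ^ 2 * Real.sin α ^ 2 := by
      intro α
      rcases eq_or_ne (Real.cos α) 0 with h | h
      · have hs : Real.sin α ^ 2 = 1 := by
          have := Real.sin_sq_add_cos_sq α; rw [h] at this; nlinarith
        rw [h, hs]; positivity
      · have h1 : 0 < (a ^ 2)⁻¹ * Real.cos α ^ 2 := by positivity
        nlinarith [sq_nonneg (a * Real.sin α), sq_nonneg (Real.sin α), sq_nonneg a]
    have hFc : Continuous (fun α => p (α + σ) *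
        ((a ^ 2)⁻¹ * Real.cos α ^ 2 - a ^ 2 * Real.sin α ^ 2) *
        ((a ^ 2)⁻¹ * Real.cos α ^ 2 + a ^ 2 * Real.sin α ^ 2) ^ (-(5:ℝ) / 2)) := by
      apply Continuous.mul
      apply Continuous.mul
      · exact hc.comp (continuous_id.add continuous_const)
      · continuity
      · apply Continuous.rpow_const
        · continuity
        · exact fun α => Or.inl (hWpos α).ne'
    have hsplit : I1 p σ a =
        (∫ α in (0:ℝ)..π, p (α + σ) *
          ((a ^ 2)⁻¹ * Real.cos α ^ 2 - a ^ 2 * Real.sin α ^ 2) *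
          ((a ^ 2)⁻¹ * Real.cos α ^ 2 + a ^ 2 * Real.sin α ^ 2) ^ (-(5:ℝ) / 2)) +
        (∫ α in π..(2 * π), p (α + σ) *
          ((a ^ 2)⁻¹ * Real.cos α ^ 2 - a ^ 2 * Real.sin α ^ 2) *
          ((a ^ 2)⁻¹ * Real.cos α ^ 2 + a ^ 2 * Real.sin α ^ 2) ^ (-(5:ℝ) / 2)) := by
      rw [I1]
      exact (integral_add_adjacent_intervals
        (hFc.intervalIntegrable _ _) (hFc.intervalIntegrable _ _)).symm
    have hIoo1 : (∫ α in (0:ℝ)..π, p (α + σ) *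
          ((a ^ 2)⁻¹ * Real.cos α ^ 2 - a ^ 2 * Real.sin α ^ 2) *
          ((a ^ 2)⁻¹ * Real.cos α ^ 2 + a ^ 2 * Real.sin α ^ 2) ^ (-(5:ℝ) / 2))
        = ∫ α in Ioo (π / 2 - π / 2) (π / 2 + π / 2), p (α + σ) *
          ((a ^ 2)⁻¹ * Real.cos α ^ 2 - a ^ 2 * Real.sin α ^ 2) *
          ((a ^ 2)⁻¹ * Real.cos α ^ 2 + a ^ 2 * Real.sin α ^ 2) ^ (-(5:ℝ) / 2) := by
      rw [intervalIntegral.integral_of_le Real.pi_pos.le, integral_Ioc_eq_integral_Ioo]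
      norm_num
    have hIoo2 : (∫ α in π..(2 * π), p (α + σ) *
          ((a ^ 2)⁻¹ * Real.cos α ^ 2 - a ^ 2 * Real.sin α ^ 2) *
          ((a ^ 2)⁻¹ * Real.cos α ^ 2 + a ^ 2 * Real.sin α ^ 2) ^ (-(5:ℝ) / 2))
        = ∫ α in Ioo (3 * π / 2 - π / 2) (3 * π / 2 + π / 2), p (α + σ) *
          ((a ^ 2)⁻¹ * Real.cos α ^ 2 - a ^ 2 * Real.sin α ^ 2) *
          ((a ^ 2)⁻¹ * Real.cos α ^ 2 + a ^ 2 * Real.sin α ^ 2) ^ (-(5:ℝ) / 2) := by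
      rw [intervalIntegral.integral_of_le (by linarith [Real.pi_pos]),
        integral_Ioc_eq_integral_Ioo]
      have e1 : 3 * π / 2 - π / 2 = π := by ring
      have e2 : 3 * π / 2 + π / 2 = 2 * π := by ring
      rw [e1, e2]
    rw [hsplit, hIoo1, hIoo2, mul_add,
      cov p σ a (π / 2) ha Real.cos_pi_div_two,
      cov p σ a (3 * π / 2) ha hcos3]
  have hlim := (tendsto_part p hc M hM σ (π / 2)).add (tendsto_part p hc M hM σ (3 * π / 2))
  have hfinal : p (π / 2 + σ) * (∫ t : ℝ, gfun t) + p (3 * π / 2 + σ) * (∫ t : ℝ, gfun t)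
      = cConst * (p (σ + π / 2) + p (σ + 3 * π / 2)) := by
    rw [integral_gfun, add_comm σ (π / 2), add_comm σ (3 * π / 2)]
    ring
  rw [← hfinal]
  apply hlim.congr'
  filter_upwards [self_mem_nhdsWithin] with a ha
  exact (heq a ha).symm
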